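/- Let Ω ⊂ ℝⁿ be a nonempty open convex set, f : Ω → ℝ locally semiconvex with linear modulus, x₀ ∈ Ω, and G a bounded open set with x₀ ∈ G ⊂ Ḡ ⊂ Ω. Suppose x₀ is an Alexandrov point of f, i.e. there exist p ∈ ℝⁿ and a symmetric matrix B with f(x) = f(x₀) + p·(x−x₀) + (x−x₀)ᵀB(x−x₀) + o(|x−x₀|²). Then there exists Λ > 0 such that for all λ ≥ Λ: f(x₀) = C^u_λ(f_G)(x₀) = C^l_λ(f_G)(x₀) and ∇f(x₀) = ∇C^u_λ(f_G)(x₀) = ∇C^l_λ(f_G)(x₀). -/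

import Mathlib

/-!
At an Alexandrov point the Lipschitz extension `fG` differs from its tangent affine function
`f x₀ + ⟪p, x - x₀⟫` by at most `M ‖x - x₀‖²` on the whole space: near `x₀` by the second-order
expansion, far from `x₀` by the Lipschitz bound. For `lam ≥ M`, the tangent function minus
`lam ‖x - x₀‖²` becomes affine after adding `lam ‖x‖²`, so it is a convex minorant of
`fG + lam ‖·‖²`. Hence both compensated transforms are squeezed between the tangent function
`± lam ‖x - x₀‖²`, which pins their value and gradient at `x₀`.
-/

open Filter Metric Set
open scoped Topology RealInnerProductSpace

/-- The convex envelope of `g`: pointwise supremum of convex functions below `g`. -/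
noncomputable def convEnv {E : Type*} [NormedAddCommGroup E] [NormedSpace ℝ E]
    (g : E → ℝ) (x : E) : ℝ :=
  sSup {y : ℝ | ∃ h : E → ℝ, ConvexOn ℝ Set.univ h ∧ (∀ z, h z ≤ g z) ∧ y = h x}

/-- Upper compensated convex transform. -/
noncomputable def upperT {E : Type*} [NormedAddCommGroup E] [NormedSpace ℝ E]
    (lam : ℝ) (g : E → ℝ) (x : E) : ℝ :=
  lam * ‖x‖ ^ 2 - convEnv (fun y => lam * ‖y‖ ^ 2 - g y) x

/-- Lower compensated convex transform. -/
noncomputable def lowerT {E : Type*} [NormedAddCommGroup E] [NormedSpace ℝ E]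
    (lam : ℝ) (g : E → ℝ) (x : E) : ℝ :=
  convEnv (fun y => g y + lam * ‖y‖ ^ 2) x - lam * ‖x‖ ^ 2

/-- A modulus: nondecreasing, upper semicontinuous, nonnegative, tending to `0` at `0+`. -/
def Modulus (ω : ℝ → ℝ) : Prop :=
  Monotone ω ∧ UpperSemicontinuous ω ∧ (∀ t, 0 ≤ ω t) ∧ Tendsto ω (𝓝[>] (0 : ℝ)) (𝓝 0)

/-- `f` is semiconvex on `K` with modulus `ω`. -/
def SemiconvexOnWith {n : ℕ} (K : Set (EuclideanSpace ℝ (Fin n))) (ω : ℝ → ℝ)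
    (f : EuclideanSpace ℝ (Fin n) → ℝ) : Prop :=
  ∀ x ∈ K, ∀ y ∈ K, ∀ s ∈ Set.Icc (0 : ℝ) 1,
    s * f x + (1 - s) * f y - f (s • x + (1 - s) • y) ≥
      -(s * (1 - s) * ‖x - y‖ * ω ‖x - y‖)

/-- `f` is locally semiconvex on `Ω`: semiconvex with some modulus on each convex compact
subset of `Ω`. -/
def LocSemiconvexOn {n : ℕ} (Ω : Set (EuclideanSpace ℝ (Fin n)))
    (f : EuclideanSpace ℝ (Fin n) → ℝ) : Prop :=
  ∀ K ⊆ Ω, IsCompact K → Convex ℝ K → ∃ ω, Modulus ω ∧ SemiconvexOnWith K ω f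

/-- The Fréchet subdifferential of a locally semiconvex function `f` at `x`. -/
def frechetSubdiff {n : ℕ} (Ω : Set (EuclideanSpace ℝ (Fin n)))
    (f : EuclideanSpace ℝ (Fin n) → ℝ) (x : EuclideanSpace ℝ (Fin n)) :
    Set (EuclideanSpace ℝ (Fin n)) :=
  {p | ∃ K ω, K ⊆ Ω ∧ IsCompact K ∧ Convex ℝ K ∧ x ∈ interior K ∧ Modulus ω ∧
    SemiconvexOnWith K ω f ∧
    ∀ y ∈ K, f y - f x - ⟪p, y - x⟫ ≥ -(‖y - x‖ * ω ‖y - x‖)}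

/-- `(c, r)` is a minimal bounding ball of `K`. -/
def IsMinBall {E : Type*} [NormedAddCommGroup E] (K : Set E) (c : E) (r : ℝ) : Prop :=
  0 ≤ r ∧ K ⊆ Metric.closedBall c r ∧ ∀ c' r', K ⊆ Metric.closedBall c' r' → r ≤ r'

/-- `f` is locally semiconvex with linear modulus on `Ω`. -/
def LocSemiconvexLinOn {n : ℕ} (Ω : Set (EuclideanSpace ℝ (Fin n)))
    (f : EuclideanSpace ℝ (Fin n) → ℝ) : Prop :=
  ∀ K ⊆ Ω, IsCompact K → Convex ℝ K →
    ∃ (lamK : ℝ) (g : EuclideanSpace ℝ (Fin n) → ℝ), 0 ≤ lamK ∧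
      ConvexOn ℝ K g ∧ ContinuousOn g K ∧ ∀ x ∈ K, f x = g x - lamK * ‖x‖ ^ 2

section Envelope

variable {E : Type*} [NormedAddCommGroup E] [NormedSpace ℝ E] {g h : E → ℝ}

theorem le_convEnv (hh : ConvexOn ℝ univ h) (hhg : ∀ z, h z ≤ g z) (x : E) :
    h x ≤ convEnv g x :=
  le_csSup ⟨g x, by rintro _ ⟨k, -, hk, rfl⟩; exact hk x⟩ ⟨h, hh, hhg, rfl⟩

theorem convEnv_le (hh : ConvexOn ℝ univ h) (hhg : ∀ z, h z ≤ g z) (x : E) :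
    convEnv g x ≤ g x :=
  csSup_le ⟨h x, h, hh, hhg, rfl⟩ (by rintro _ ⟨k, -, hk, rfl⟩; exact hk x)

theorem upperT_eq_neg_lowerT_neg (lam : ℝ) (g : E → ℝ) :
    upperT lam g = fun x => -lowerT lam (-g) x := by
  funext x
  have hψ : (fun y => lam * ‖y‖ ^ 2 - g y) = fun y => (-g) y + lam * ‖y‖ ^ 2 := by
    funext y
    simp only [Pi.neg_apply]
    ring
  simp only [upperT, lowerT, hψ]
  ring

end Envelope

section Quadratic

variable {E : Type*} [NormedAddCommGroup E] [InnerProductSpace ℝ E]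

theorem eq_and_hasGradientAt_of_abs_sub_le_sq [CompleteSpace E] {F : E → ℝ} {c C : ℝ}
    {p x₀ : E} (h : ∀ y, |F y - c - ⟪p, y - x₀⟫| ≤ C * ‖y - x₀‖ ^ 2) :
    F x₀ = c ∧ HasGradientAt F p x₀ := by
  have hc : F x₀ = c := by simpa [sub_eq_zero] using h x₀
  refine ⟨hc, hasGradientAt_iff_isLittleO.2 ?_⟩
  have hO : (fun y => F y - F x₀ - ⟪p, y - x₀⟫) =O[𝓝 x₀] fun y => ‖y - x₀‖ ^ 2 :=
    Asymptotics.IsBigO.of_bound C (Eventually.of_forall fun y => by simpa [hc] using h y)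
  exact hO.trans_isLittleO (Asymptotics.isLittleO_pow_sub_sub x₀ one_lt_two)

variable {g : E → ℝ} {p x₀ : E} {M lam : ℝ}

/-- The minorant `g x₀ + ⟪p, · - x₀⟫ - lam ‖· - x₀‖²` of `g` becomes affine after adding
`lam ‖·‖²`, so it stays below the convex envelope. -/
theorem abs_lowerT_sub_le (hM : M ≤ lam)
    (hg : ∀ y, |g y - g x₀ - ⟪p, y - x₀⟫| ≤ M * ‖y - x₀‖ ^ 2) (y : E) :
    |lowerT lam g y - g x₀ - ⟪p, y - x₀⟫| ≤ lam * ‖y - x₀‖ ^ 2 := by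
  set h : E → ℝ := fun z => g x₀ + ⟪p, z - x₀⟫ - lam * ‖z - x₀‖ ^ 2 + lam * ‖z‖ ^ 2
  have h_affine : h = fun z => ⟪p + (2 * lam) • x₀, z⟫ + (g x₀ - ⟪p, x₀⟫ - lam * ‖x₀‖ ^ 2) := by
    funext z
    simp only [h, inner_add_left, inner_sub_right, real_inner_smul_left, norm_sub_sq_real,
      real_inner_comm x₀ z]
    ring
  have hh : ConvexOn ℝ univ h := by
    rw [h_affine]
    exact ((innerₛₗ ℝ (p + (2 * lam) • x₀)).convexOn convex_univ).add_const _
  have hsq (z : E) : M * ‖z - x₀‖ ^ 2 ≤ lam * ‖z - x₀‖ ^ 2 :=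
    mul_le_mul_of_nonneg_right hM (sq_nonneg _)
  have hhg (z : E) : h z ≤ g z + lam * ‖z‖ ^ 2 := by
    have := neg_abs_le (g z - g x₀ - ⟪p, z - x₀⟫)
    linarith [hg z, hsq z]
  have hlow := le_convEnv hh hhg y
  have hup := convEnv_le hh hhg y
  rw [abs_le]
  constructor
  · simp only [lowerT, h] at hlow ⊢
    linarith
  · simp only [lowerT] at hup ⊢
    linarith [le_abs_self (g y - g x₀ - ⟪p, y - x₀⟫), hg y, hsq y]

theorem abs_upperT_sub_le (hM : M ≤ lam)
    (hg : ∀ y, |g y - g x₀ - ⟪p, y - x₀⟫| ≤ M * ‖y - x₀‖ ^ 2) (y : E) :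
    |upperT lam g y - g x₀ - ⟪p, y - x₀⟫| ≤ lam * ‖y - x₀‖ ^ 2 := by
  have hneg (z : E) : (-g) z - (-g) x₀ - ⟪-p, z - x₀⟫ = -(g z - g x₀ - ⟪p, z - x₀⟫) := by
    simp only [Pi.neg_apply, inner_neg_left]
    ring
  have hupper : upperT lam g y - g x₀ - ⟪p, y - x₀⟫ =
      -(lowerT lam (-g) y - (-g) x₀ - ⟪-p, y - x₀⟫) := by
    simp only [upperT_eq_neg_lowerT_neg, Pi.neg_apply, inner_neg_left]
    ring
  rw [hupper, abs_neg]
  exact abs_lowerT_sub_le hM (fun z => by rw [hneg, abs_neg]; exact hg z) y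

end Quadratic

section Alexandrov

theorem exists_forall_norm_le_mul_sq_of_isBigO {E F : Type*} [SeminormedAddCommGroup E]
    [SeminormedAddCommGroup F] {φ : E → F} {x₀ : E} {K : ℝ} (hK : 0 ≤ K)
    (hloc : φ =O[𝓝[≠] x₀] fun x => ‖x - x₀‖ ^ 2) (hlin : ∀ x, ‖φ x‖ ≤ K * ‖x - x₀‖) :
    ∃ M, ∀ x, ‖φ x‖ ≤ M * ‖x - x₀‖ ^ 2 := by
  obtain ⟨C, hC⟩ := hloc.bound
  rw [eventually_nhdsWithin_iff, Metric.eventually_nhds_iff] at hC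
  obtain ⟨δ, hδ, hC⟩ := hC
  refine ⟨max C (K / δ), fun x => ?_⟩
  rcases lt_or_ge (dist x x₀) δ with hx | hx
  · rcases eq_or_ne x x₀ with rfl | hne
    · simpa using hlin x
    · calc ‖φ x‖ ≤ C * ‖‖x - x₀‖ ^ 2‖ := hC hx hne
        _ ≤ max C (K / δ) * ‖x - x₀‖ ^ 2 := by
          rw [norm_pow, norm_norm]
          exact mul_le_mul_of_nonneg_right (le_max_left _ _) (sq_nonneg _)
  · rw [dist_eq_norm] at hx
    calc ‖φ x‖ ≤ K * ‖x - x₀‖ := hlin x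
      _ = K / δ * (δ * ‖x - x₀‖) := by field_simp
      _ ≤ K / δ * ‖x - x₀‖ ^ 2 := by
          rw [sq]
          exact mul_le_mul_of_nonneg_left (mul_le_mul_of_nonneg_right hx (norm_nonneg _))
            (div_nonneg hK hδ.le)
      _ ≤ max C (K / δ) * ‖x - x₀‖ ^ 2 :=
          mul_le_mul_of_nonneg_right (le_max_right _ _) (sq_nonneg _)

variable {E : Type*} [NormedAddCommGroup E] [InnerProductSpace ℝ E]

theorem isBigO_sub_inner_of_tendsto_div_sq {f : E → ℝ} {p x₀ : E} {B : E →L[ℝ] E}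
    (hAlex : Tendsto
      (fun x => (f x - f x₀ - ⟪p, x - x₀⟫ - ⟪x - x₀, B (x - x₀)⟫) / ‖x - x₀‖ ^ 2)
      (𝓝[≠] x₀) (𝓝 0)) :
    (fun x => f x - f x₀ - ⟪p, x - x₀⟫) =O[𝓝[≠] x₀] fun x => ‖x - x₀‖ ^ 2 := by
  have hrem := Asymptotics.isBigO_of_div_tendsto_nhds
    (eventually_nhdsWithin_of_forall fun x (hx : x ≠ x₀) h0 =>
      absurd h0 (pow_ne_zero 2 (norm_ne_zero_iff.2 (sub_ne_zero.2 hx)))) 0 hAlex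
  have hquad : (fun x => ⟪x - x₀, B (x - x₀)⟫) =O[𝓝[≠] x₀] fun x => ‖x - x₀‖ ^ 2 := by
    refine Asymptotics.IsBigO.of_bound ‖B‖ (Eventually.of_forall fun x => ?_)
    rw [Real.norm_eq_abs, norm_pow, norm_norm, sq, mul_left_comm]
    exact (abs_real_inner_le_norm _ _).trans
      (mul_le_mul_of_nonneg_left (B.le_opNorm _) (norm_nonneg _))
  exact (hrem.add hquad).congr_left fun x => by ring

theorem LipschitzWith.norm_sub_sub_inner_le {g : E → ℝ} {L : NNReal} (hg : LipschitzWith L g)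
    (p x₀ x : E) : ‖g x - g x₀ - ⟪p, x - x₀⟫‖ ≤ (L + ‖p‖) * ‖x - x₀‖ := by
  calc ‖g x - g x₀ - ⟪p, x - x₀⟫‖ ≤ ‖g x - g x₀‖ + ‖⟪p, x - x₀⟫‖ := _root_.norm_sub_le _ _
    _ ≤ L * ‖x - x₀‖ + ‖p‖ * ‖x - x₀‖ := by
        gcongr
        · rw [← dist_eq_norm, ← dist_eq_norm]
          exact hg.dist_le_mul x x₀
        · exact norm_inner_le_norm _ _
    _ = (L + ‖p‖) * ‖x - x₀‖ := by ring

end Alexandrov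

theorem stmt_15_general {n : ℕ}
    (f : EuclideanSpace ℝ (Fin n) → ℝ)
    (x₀ : EuclideanSpace ℝ (Fin n))
    (G : Set (EuclideanSpace ℝ (Fin n))) (hGo : IsOpen G)
    (hx₀G : x₀ ∈ G)
    (L : NNReal)
    (fG : EuclideanSpace ℝ (Fin n) → ℝ) (hfG : LipschitzWith L fG)
    (hext : ∀ y ∈ closure G, fG y = f y)
    -- `x₀` is an Alexandrov point of `f`:
    (p : EuclideanSpace ℝ (Fin n))
    (B : EuclideanSpace ℝ (Fin n) →L[ℝ] EuclideanSpace ℝ (Fin n))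
    (hAlex : Tendsto
      (fun x => (f x - f x₀ - ⟪p, x - x₀⟫ - ⟪x - x₀, B (x - x₀)⟫) / ‖x - x₀‖ ^ 2)
      (𝓝[≠] x₀) (𝓝 0)) :
    ∃ Λ : ℝ, 0 < Λ ∧ ∀ lam : ℝ, Λ ≤ lam →
      (f x₀ = upperT lam fG x₀ ∧ f x₀ = lowerT lam fG x₀) ∧
      DifferentiableAt ℝ f x₀ ∧
      gradient f x₀ = gradient (upperT lam fG) x₀ ∧
      gradient f x₀ = gradient (lowerT lam fG) x₀ := by
  have hfG_eq : fG =ᶠ[𝓝 x₀] f := Filter.mem_of_superset (hGo.mem_nhds hx₀G)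
    fun y hy => hext y (subset_closure hy)
  have hloc : (fun x => fG x - fG x₀ - ⟪p, x - x₀⟫) =O[𝓝[≠] x₀] fun x => ‖x - x₀‖ ^ 2 :=
    (isBigO_sub_inner_of_tendsto_div_sq hAlex).congr'
      ((hfG_eq.filter_mono nhdsWithin_le_nhds).mono fun x hx => by simp only [hx, hfG_eq.eq_of_nhds])
      EventuallyEq.rfl
  obtain ⟨M, hM⟩ := exists_forall_norm_le_mul_sq_of_isBigO (by positivity) hloc
    (hfG.norm_sub_sub_inner_le p x₀)
  simp only [Real.norm_eq_abs] at hM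
  have hgrad : HasGradientAt f p x₀ :=
    (eq_and_hasGradientAt_of_abs_sub_le_sq hM).2.congr_of_eventuallyEq hfG_eq.symm
  refine ⟨max M 0 + 1, by positivity, fun lam hlam => ?_⟩
  have hMlam : M ≤ lam := by linarith [le_max_left M 0]
  obtain ⟨hu, hu'⟩ := eq_and_hasGradientAt_of_abs_sub_le_sq (abs_upperT_sub_le hMlam hM)
  obtain ⟨hl, hl'⟩ := eq_and_hasGradientAt_of_abs_sub_le_sq (abs_lowerT_sub_le hMlam hM)
  rw [← hfG_eq.eq_of_nhds, hu, hl, hgrad.gradient, hu'.gradient, hl'.gradient]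
  exact ⟨⟨rfl, rfl⟩, hgrad.differentiableAt, rfl, rfl⟩

theorem stmt_15 {n : ℕ} (Ω : Set (EuclideanSpace ℝ (Fin n))) (hΩne : Ω.Nonempty)
    (hΩo : IsOpen Ω) (hΩcv : Convex ℝ Ω)
    (f : EuclideanSpace ℝ (Fin n) → ℝ) (hf : LocSemiconvexLinOn Ω f)
    (x₀ : EuclideanSpace ℝ (Fin n)) (hx₀ : x₀ ∈ Ω)
    (G : Set (EuclideanSpace ℝ (Fin n))) (hGo : IsOpen G) (hGb : Bornology.IsBounded G)
    (hx₀G : x₀ ∈ G) (hGΩ : closure G ⊆ Ω)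
    (L : NNReal) (hLip : LipschitzOnWith L f (closure G))
    (fG : EuclideanSpace ℝ (Fin n) → ℝ) (hfG : LipschitzWith L fG)
    (hext : ∀ y ∈ closure G, fG y = f y)
    -- `x₀` is an Alexandrov point of `f`:
    (p : EuclideanSpace ℝ (Fin n))
    (B : EuclideanSpace ℝ (Fin n) →L[ℝ] EuclideanSpace ℝ (Fin n))
    (hBsym : ∀ v w, ⟪B v, w⟫ = ⟪v, B w⟫)
    (hAlex : Tendsto
      (fun x => (f x - f x₀ - ⟪p, x - x₀⟫ - ⟪x - x₀, B (x - x₀)⟫) / ‖x - x₀‖ ^ 2)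
      (𝓝[≠] x₀) (𝓝 0)) :
    ∃ Λ : ℝ, 0 < Λ ∧ ∀ lam : ℝ, Λ ≤ lam →
      (f x₀ = upperT lam fG x₀ ∧ f x₀ = lowerT lam fG x₀) ∧
      DifferentiableAt ℝ f x₀ ∧
      gradient f x₀ = gradient (upperT lam fG) x₀ ∧
      gradient f x₀ = gradient (lowerT lam fG) x₀ :=
  stmt_15_general f x₀ G hGo hx₀G L fG hfG hext p B hAlex
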